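/- Let G be a finite simple 3-connected graph and let (A,B) be a separation of G of order 3. Then both induced subgraphs G[A] and G[B] are connected. -/

import Mathlib

/-!
Let `(A, B)` be a separation of minimum order and `a ∈ A ∖ B`. The vertices of `A` reachable
from `a` inside `G[A]` form a set `C` with no edge from `C ∖ B` to `A ∖ C`, so `(C, (A ∖ C) ∪ B)`
is again a separation, of order `|C ∩ B| ≤ |A ∩ B|`. Minimality forces `C ∩ B = A ∩ B`: every
vertex of `A ∩ B` is reachable from every vertex of `A ∖ B`, and `G[A]` is connected.
-/

open SimpleGraph

/-- Two vertex sets are adjacent if some edge of `G` has one endpoint in each. -/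
def SetsAdjacent {V : Type*} (G : SimpleGraph V) (X Y : Set V) : Prop :=
  ∃ x ∈ X, ∃ y ∈ Y, G.Adj x y

/-- `B : Fin t → Set V` are the branch-sets of a `K_t`-minor in `G`:
pairwise disjoint nonempty sets, each inducing a connected subgraph,
and pairwise adjacent. -/
def IsKMinor {V : Type*} (G : SimpleGraph V) (t : ℕ) (B : Fin t → Set V) : Prop :=
  (∀ i, (B i).Nonempty) ∧
  (∀ i j, i ≠ j → Disjoint (B i) (B j)) ∧
  (∀ i, (G.induce (B i)).Connected) ∧
  (∀ i j, i ≠ j → SetsAdjacent G (B i) (B j))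

/-- A separation of `G`: `A ∪ B = V(G)`, both sides have a private vertex, and
no edge joins `A ∖ B` to `B ∖ A`. -/
def IsSeparation {V : Type*} (G : SimpleGraph V) (A B : Set V) : Prop :=
  A ∪ B = Set.univ ∧ (A \ B).Nonempty ∧ (B \ A).Nonempty ∧
  ∀ a ∈ A \ B, ∀ b ∈ B \ A, ¬ G.Adj a b

namespace IsSeparation

variable {V : Type*} {G : SimpleGraph V} {A B : Set V}

lemma symm (h : IsSeparation G A B) : IsSeparation G B A :=
  ⟨Set.union_comm A B ▸ h.1, h.2.2.1, h.2.1, fun b hb a ha hab => h.2.2.2 a ha b hb hab.symm⟩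

lemma cut_left (h : IsSeparation G A B) {C : Set V} (hCA : C ⊆ A) (hC : (C \ B).Nonempty)
    (hclosed : ∀ x ∈ C \ B, ∀ y ∈ A \ C, ¬ G.Adj x y) :
    IsSeparation G C ((A \ C) ∪ B) := by
  obtain ⟨hcover, -, ⟨b, hbB, hbA⟩, hnoedge⟩ := h
  refine ⟨?_, ?_, ⟨b, Or.inr hbB, fun hbC => hbA (hCA hbC)⟩, ?_⟩
  · rw [Set.eq_univ_iff_forall] at hcover ⊢
    intro x
    by_cases hxC : x ∈ C
    · exact Or.inl hxC
    · rcases hcover x with hxA | hxB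
      exacts [Or.inr (Or.inl ⟨hxA, hxC⟩), Or.inr (Or.inr hxB)]
  · obtain ⟨c, hcC, hcB⟩ := hC
    exact ⟨c, hcC, by rintro (⟨-, hc⟩ | hc) <;> contradiction⟩
  · rintro x ⟨hxC, hx⟩ y ⟨hy, hyC⟩
    have hxB : x ∉ B := fun hxB => hx (Or.inr hxB)
    by_cases hyA : y ∈ A
    · exact hclosed x ⟨hxC, hxB⟩ y ⟨hyA, hyC⟩
    · exact hnoedge x ⟨hCA hxC, hxB⟩ y ⟨hy.resolve_left (fun h => hyA h.1), hyA⟩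

variable (hsep : IsSeparation G A B)
  (hmin : ∀ A' B', IsSeparation G A' B' → (A ∩ B).ncard ≤ (A' ∩ B').ncard)
  (hne : (A ∩ B).ncard ≠ 0)
include hsep hmin hne

lemma reachable_of_minimal {a s : V} (ha : a ∈ A \ B) (hs : s ∈ A ∩ B) :
    (G.induce A).Reachable ⟨a, ha.1⟩ ⟨s, hs.1⟩ := by
  set C : Set V := {w | ∃ hw : w ∈ A, (G.induce A).Reachable ⟨a, ha.1⟩ ⟨w, hw⟩}
  have hCA : C ⊆ A := fun w hw => hw.1
  have hclosed : ∀ x ∈ C \ B, ∀ y ∈ A \ C, ¬ G.Adj x y := by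
    rintro x ⟨⟨hxA, hax⟩, -⟩ y ⟨hyA, hyC⟩ hxy
    exact hyC ⟨hyA, hax.trans (Adj.reachable (G := G.induce A) hxy)⟩
  have hcut := hsep.cut_left hCA ⟨a, ⟨ha.1, Reachable.refl _⟩, ha.2⟩ hclosed
  have hle := hmin _ _ hcut
  rw [Set.inter_union_distrib_left, Set.inter_sdiff_self, Set.empty_union] at hle
  have hCB : C ∩ B = A ∩ B :=
    Set.eq_of_subset_of_ncard_le (fun x hx => ⟨hCA hx.1, hx.2⟩) hle
      (Set.finite_of_ncard_ne_zero hne)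
  exact (hCB ▸ hs : s ∈ C ∩ B).1.2

lemma connected_induce_left_of_minimal : (G.induce A).Connected := by
  obtain ⟨a₀, ha₀⟩ := hsep.2.1
  obtain ⟨s, hs⟩ := Set.nonempty_of_ncard_ne_zero hne
  have hreach : ∀ w (hw : w ∈ A), (G.induce A).Reachable ⟨w, hw⟩ ⟨s, hs.1⟩ := by
    intro w hw
    by_cases hwB : w ∈ B
    · exact (hsep.reachable_of_minimal hmin hne ha₀ ⟨hw, hwB⟩).symm.trans
        (hsep.reachable_of_minimal hmin hne ha₀ hs)
    · exact hsep.reachable_of_minimal hmin hne ⟨hw, hwB⟩ hs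
  have : Nonempty A := ⟨⟨a₀, ha₀.1⟩⟩
  exact ⟨fun x y => (hreach x.1 x.2).trans (hreach y.1 y.2).symm⟩

end IsSeparation

theorem stmt9_general {V : Type*} (G : SimpleGraph V)
    (h3conn : ∀ A' B' : Set V, IsSeparation G A' B' → 3 ≤ (A' ∩ B').ncard)
    (A B : Set V) (hsep : IsSeparation G A B) (horder : (A ∩ B).ncard = 3) :
    (G.induce A).Connected ∧ (G.induce B).Connected := by
  have hne : (A ∩ B).ncard ≠ 0 := by omega
  have hmin : ∀ A' B', IsSeparation G A' B' → (A ∩ B).ncard ≤ (A' ∩ B').ncard :=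
    horder ▸ h3conn
  refine ⟨hsep.connected_induce_left_of_minimal hmin hne, ?_⟩
  rw [Set.inter_comm] at hmin hne
  exact hsep.symm.connected_induce_left_of_minimal hmin hne

/-- In a 3-connected graph, both sides of a separation of order 3 induce
connected subgraphs. -/
theorem stmt9 {V : Type*} [Fintype V] (G : SimpleGraph V)
    (hcard : 3 < Fintype.card V)
    (h3conn : ∀ A' B' : Set V, IsSeparation G A' B' → 3 ≤ (A' ∩ B').ncard)
    (A B : Set V) (hsep : IsSeparation G A B) (horder : (A ∩ B).ncard = 3) :
    (G.induce A).Connected ∧ (G.induce B).Connected :=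
  stmt9_general G h3conn A B hsep horder
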